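/- arXiv:1912.01093 — 2 statements merged into one kernel-verified Lean document; each statement's English description precedes it below -/
import Mathlib

section
/- Let G be a graph of order n with diameter 2, minimum degree δ and maximum degree Δ. Then γ^t_StR(G) ≤ δ·(1 + ⌈(Δ−1)/2⌉) + 1. -/
/-!
Label a vertex `v` of minimum degree `δ` with `1`, its neighbours with `1 + ⌊Δ/2⌋` and every
other vertex with `0`; the weight is `δ (1 + ⌊Δ/2⌋) + 1`. Since the diameter is `2`, every
vertex labelled `0` has a common neighbour `b` with `v`. As `v` itself is a positive neighbour
of `b`, at most `Δ - 1` neighbours of `b` are labelled `0`, and `1 + ⌈(Δ - 1)/2⌉ = 1 + ⌊Δ/2⌋`.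
-/

open Finset

variable {V : Type*} [Fintype V]

/-- The degree of a vertex. -/
noncomputable def degN (G : SimpleGraph V) (v : V) : ℕ := {u | G.Adj v u}.ncard

/-- Maximum degree. -/
noncomputable def maxDeg (G : SimpleGraph V) : ℕ := Finset.univ.sup (degN G)

/-- Minimum degree. -/
noncomputable def minDeg (G : SimpleGraph V) : ℕ := sInf {d | ∃ v, degN G v = d}

/-- No isolated vertex. -/
def NoIsolated (G : SimpleGraph V) : Prop := ∀ v, ∃ u, G.Adj v u

/-- Total strong Roman dominating function. `(Δ+1)/2 = ⌈Δ/2⌉` and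
`(m+1)/2 = ⌈m/2⌉` in natural-number arithmetic. -/
def IsTSRDF (G : SimpleGraph V) (f : V → ℕ) : Prop :=
  (∀ v, f v ≤ (maxDeg G + 1) / 2 + 1) ∧
  (∀ v, f v = 0 → ∃ u, G.Adj v u ∧
      1 + ({w | G.Adj u w ∧ f w = 0}.ncard + 1) / 2 ≤ f u) ∧
  (∀ v, 0 < f v → ∃ u, G.Adj v u ∧ 0 < f u)

/-- The total strong Roman domination number. -/
noncomputable def tsrd (G : SimpleGraph V) : ℕ :=
  sInf {k | ∃ f : V → ℕ, IsTSRDF G f ∧ ∑ v, f v = k}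

namespace SimpleGraph

lemma exists_commonNeighbor_of_eccent_le_two {α : Type*} {G : SimpleGraph α} {v w : α}
    (hecc : G.eccent v ≤ 2) (hne : v ≠ w) (hnadj : ¬G.Adj v w) :
    ∃ b, G.Adj v b ∧ G.Adj b w := by
  obtain ⟨b, hb⟩ : (G.commonNeighbors v w).Nonempty :=
    Set.nonempty_iff_ne_empty.mpr fun hempty ↦
      (G.edist_le_eccent.trans hecc).not_gt (two_lt_edist_iff.mpr ⟨hne, hnadj, hempty⟩)
  exact ⟨b, (G.mem_commonNeighbors.mp hb).1, (G.mem_commonNeighbors.mp hb).2.symm⟩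

lemma ediam_eq_diam_of_diam_ne_zero {α : Type*} {G : SimpleGraph α} (h : G.diam ≠ 0) :
    G.ediam = G.diam :=
  (ENat.natCast_toNat (G.ediam_ne_top_of_diam_ne_zero h)).symm

end SimpleGraph

open SimpleGraph

lemma degN_le_maxDeg (G : SimpleGraph V) (v : V) : degN G v ≤ maxDeg G :=
  Finset.le_sup (mem_univ v)

lemma exists_degN_eq_minDeg {α : Type*} [Nonempty α] (G : SimpleGraph α) :
    ∃ v, degN G v = minDeg G :=
  Nat.sInf_mem (s := {d | ∃ v, degN G v = d}) ⟨degN G Classical.ofNonempty, _, rfl⟩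

lemma tsrd_le_of_isTSRDF {G : SimpleGraph V} {f : V → ℕ} (hf : IsTSRDF G f) :
    tsrd G ≤ ∑ v, f v :=
  Nat.sInf_le ⟨f, hf, rfl⟩

lemma ncard_adj_zero_add_one_le_degN {G : SimpleGraph V} {f : V → ℕ} {b v : V}
    (hbv : G.Adj b v) (hfv : f v ≠ 0) :
    {w | G.Adj b w ∧ f w = 0}.ncard + 1 ≤ degN G b :=
  Set.ncard_lt_ncard (t := {w | G.Adj b w}) <|
    ssubset_of_subset_not_subset (fun _ hw ↦ hw.1) fun hsub ↦ hfv (hsub hbv).2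

open Classical in
noncomputable def starLabel (G : SimpleGraph V) (v : V) (u : V) : ℕ :=
  if u = v then 1 else if G.Adj v u then 1 + maxDeg G / 2 else 0

section starLabel

variable {G : SimpleGraph V} {v u : V}

lemma starLabel_self : starLabel G v v = 1 := by
  simp [starLabel]

lemma starLabel_of_adj (h : G.Adj v u) : starLabel G v u = 1 + maxDeg G / 2 := by
  simp [starLabel, h, h.ne']

lemma starLabel_of_ne [DecidableRel G.Adj] (h : u ≠ v) :
    starLabel G v u = if G.Adj v u then 1 + maxDeg G / 2 else 0 := by
  simp [starLabel, h]

lemma starLabel_eq_zero_iff : starLabel G v u = 0 ↔ u ≠ v ∧ ¬G.Adj v u := by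
  unfold starLabel
  split_ifs <;> simp_all

lemma starLabel_le : starLabel G v u ≤ (maxDeg G + 1) / 2 + 1 := by
  unfold starLabel
  split_ifs <;> omega

lemma isTSRDF_starLabel (hecc : G.eccent v ≤ 2) (hv : ∃ u, G.Adj v u) :
    IsTSRDF G (starLabel G v) := by
  refine ⟨fun _ ↦ starLabel_le, fun w hw ↦ ?_, fun w hw ↦ ?_⟩
  · obtain ⟨hwv, hnadj⟩ := starLabel_eq_zero_iff.mp hw
    obtain ⟨b, hvb, hbw⟩ := exists_commonNeighbor_of_eccent_le_two hecc hwv.symm hnadj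
    refine ⟨b, hbw.symm, ?_⟩
    have hzeros := ncard_adj_zero_add_one_le_degN (f := starLabel G v) hvb.symm
      (by rw [starLabel_self]; omega)
    have hdeg := degN_le_maxDeg G b
    rw [starLabel_of_adj hvb]
    omega
  · by_cases hwv : w = v
    · obtain ⟨u, hvu⟩ := hv
      exact ⟨u, hwv ▸ hvu, by rw [starLabel_of_adj hvu]; omega⟩
    · have hvw : G.Adj v w := by
        by_contra hnadj
        exact hw.ne' (starLabel_eq_zero_iff.mpr ⟨hwv, hnadj⟩)
      exact ⟨v, hvw.symm, by rw [starLabel_self]; omega⟩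

lemma sum_starLabel : ∑ u, starLabel G v u = 1 + degN G v * (1 + maxDeg G / 2) := by
  classical
  rw [← add_sum_erase _ _ (mem_univ v), starLabel_self, sum_congr rfl fun u hu ↦
    starLabel_of_ne (ne_of_mem_erase hu), ← sum_filter, sum_const, smul_eq_mul, degN,
    Set.ncard_eq_toFinset_card']
  congr 3
  ext u
  simp only [mem_filter, mem_erase, mem_univ, Set.mem_toFinset, Set.mem_ofPred_eq]
  exact ⟨fun h ↦ h.2, fun h ↦ ⟨⟨h.ne', trivial⟩, h⟩⟩

end starLabel

theorem stmt6_general (G : SimpleGraph V) (hd : G.diam = 2) :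
    tsrd G ≤ minDeg G * (1 + maxDeg G / 2) + 1 := by
  have hediam : G.ediam = 2 := by simpa [hd] using G.ediam_eq_diam_of_diam_ne_zero (by omega)
  have : Nontrivial V := G.nontrivial_of_diam_ne_zero (by omega)
  obtain ⟨v, hv⟩ := exists_degN_eq_minDeg G
  have hconn : G.Connected := G.connected_of_ediam_ne_top (by simp [hediam])
  have hf := isTSRDF_starLabel (hediam ▸ G.eccent_le_ediam)
    (hconn.preconnected.exists_adj_of_nontrivial v)
  calc tsrd G ≤ ∑ u, starLabel G v u := tsrd_le_of_isTSRDF hf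
    _ = minDeg G * (1 + maxDeg G / 2) + 1 := by rw [sum_starLabel, hv]; ring

theorem stmt6 (G : SimpleGraph V) (hc : G.Connected) (hd : G.diam = 2) :
    tsrd G ≤ minDeg G * (1 + maxDeg G / 2) + 1 :=
  stmt6_general G hd
end

section
/- If G is a graph of order n ≥ 4 with minimum degree at least one, then γ^t_StR(G) ≤ 2(γ_StR(G) − 1), where γ_StR(G) is the strong Roman domination number. -/
/-!
Take a minimum strong Roman dominating function `f` of weight `w`, with positive set `P`,
zero set `Z` and excess `s = ∑ (f v - 1)`, so that `w = |P| + s` and `n = |P| + |Z|`.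
The constant function `1` is a total strong Roman dominating function, so `γ^t_StR ≤ n`;
this settles the case `Z = ∅`. Otherwise some vertex carries a label at least `2`, so `s ≥ 1`.
Giving label `1` to one zero neighbour of every positive vertex without positive neighbours
makes `f` total at cost at most `|P|`, which gives `γ^t_StR ≤ w + |P| ≤ 2w - 2` when `s ≥ 2`.
When `s = 1` a single vertex `z` carries label `2` and dominates all of `Z`, so `|Z| ≤ 2`
and `γ^t_StR ≤ n ≤ w + 1 ≤ 2w - 2` because `n ≥ 4`.
-/

open Finset

variable {V : Type*} [Fintype V]

/-- Strong Roman dominating function. -/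
def IsSRDF (G : SimpleGraph V) (f : V → ℕ) : Prop :=
  (∀ v, f v ≤ (maxDeg G + 1) / 2 + 1) ∧
  (∀ v, f v = 0 → ∃ u, G.Adj v u ∧
      1 + ({w | G.Adj u w ∧ f w = 0}.ncard + 1) / 2 ≤ f u)

/-- Strong Roman domination number. -/
noncomputable def srd (G : SimpleGraph V) : ℕ :=
  sInf {k | ∃ f : V → ℕ, IsSRDF G f ∧ ∑ v, f v = k}

lemma sum_eq_card_pos_add_sum_tsub_one {ι : Type*} (s : Finset ι) (f : ι → ℕ) :
    ∑ i ∈ s, f i = #{i ∈ s | 0 < f i} + ∑ i ∈ s, (f i - 1) := by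
  rw [card_filter, ← sum_add_distrib]
  refine sum_congr rfl fun i _ => ?_
  split_ifs <;> omega

lemma eq_of_two_le_of_sum_tsub_one_le_one {ι : Type*} [Fintype ι] {f : ι → ℕ}
    (hs : ∑ i, (f i - 1) ≤ 1) {i j : ι} (hi : 2 ≤ f i) (hj : 2 ≤ f j) : i = j := by
  classical
  by_contra hij
  have := sum_le_sum_of_subset (f := fun i => f i - 1) (subset_univ {i, j})
  rw [sum_pair hij] at this
  omega

variable {G : SimpleGraph V} {f : V → ℕ}

lemma tsrd_le_sum {g : V → ℕ} (hg : IsTSRDF G g) : tsrd G ≤ ∑ v, g v :=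
  Nat.sInf_le ⟨g, hg, rfl⟩

lemma isTSRDF_one (hG : NoIsolated G) : IsTSRDF G fun _ => 1 := by
  refine ⟨fun _ => Nat.le_add_left 1 _, fun _ h => absurd h one_ne_zero, fun v _ => ?_⟩
  obtain ⟨u, hu⟩ := hG v
  exact ⟨u, hu, one_pos⟩

lemma tsrd_le_card (hG : NoIsolated G) : tsrd G ≤ Fintype.card V := by
  simpa using tsrd_le_sum (isTSRDF_one hG)

lemma isSRDF_one : IsSRDF G fun _ => 1 :=
  ⟨fun _ => Nat.le_add_left 1 _, fun _ h => absurd h one_ne_zero⟩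

lemma exists_isSRDF_sum_eq_srd (G : SimpleGraph V) : ∃ f, IsSRDF G f ∧ ∑ v, f v = srd G :=
  Nat.sInf_mem (s := {k | ∃ f : V → ℕ, IsSRDF G f ∧ ∑ v, f v = k}) ⟨_, _, isSRDF_one, rfl⟩

lemma two_le_of_dominates {u v : V} (huv : G.Adj u v) (hv : f v = 0)
    (hu : 1 + ({w | G.Adj u w ∧ f w = 0}.ncard + 1) / 2 ≤ f u) : 2 ≤ f u := by
  have : 0 < {w | G.Adj u w ∧ f w = 0}.ncard := (Set.ncard_pos (Set.toFinite _)).2 ⟨v, huv, hv⟩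
  omega

lemma IsSRDF.isTSRDF_add_indicator [DecidableEq V] (hf : IsSRDF G f) {B : Finset V}
    (hB : ∀ v ∈ B, f v = 0 ∧ ∃ u, G.Adj v u ∧ 0 < f u)
    (hcover : ∀ v, 0 < f v → ∃ u, G.Adj v u ∧ (0 < f u ∨ u ∈ B)) :
    IsTSRDF G fun v => f v + if v ∈ B then 1 else 0 := by
  obtain ⟨hcap, hdom⟩ := hf
  refine ⟨fun v => ?_, fun v hv => ?_, fun v hv => ?_⟩
  · by_cases hvB : v ∈ B
    · simp [hvB, (hB v hvB).1]
    · simpa [hvB] using hcap v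
  · dsimp only at hv ⊢
    obtain ⟨u, hvu, hu⟩ := hdom v (by omega)
    refine ⟨u, hvu, ?_⟩
    have hsub : {w | G.Adj u w ∧ f w + (if w ∈ B then 1 else 0) = 0} ⊆
        {w | G.Adj u w ∧ f w = 0} := fun w ⟨huw, hw⟩ => ⟨huw, by omega⟩
    have := Set.ncard_le_ncard hsub
    omega
  · dsimp only at hv ⊢
    by_cases hvB : v ∈ B
    · obtain ⟨u, hvu, hu⟩ := (hB v hvB).2
      exact ⟨u, hvu, by omega⟩
    · obtain ⟨u, hvu, hu | hu⟩ := hcover v (by simpa [hvB] using hv)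
      · exact ⟨u, hvu, by omega⟩
      · exact ⟨u, hvu, by simp [hu]⟩

lemma IsSRDF.exists_isTSRDF_sum_le (hG : NoIsolated G) (hf : IsSRDF G f) :
    ∃ g, IsTSRDF G g ∧ ∑ v, g v ≤ ∑ v, f v + #{v | 0 < f v} := by
  classical
  choose b hb using hG
  set I : Finset V := {v | 0 < f v ∧ ∀ u, G.Adj v u → f u = 0}
  refine ⟨_, hf.isTSRDF_add_indicator (B := I.image b) ?_ ?_, ?_⟩
  · simp only [mem_image]
    rintro _ ⟨x, hx, rfl⟩
    obtain ⟨hx, hx0⟩ := (mem_filter.1 hx).2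
    exact ⟨hx0 _ (hb x), x, (hb x).symm, hx⟩
  · intro v hv
    by_cases hvI : v ∈ I
    · exact ⟨b v, hb v, Or.inr (mem_image_of_mem b hvI)⟩
    · simp only [I, mem_filter, mem_univ, true_and, hv, not_forall] at hvI
      obtain ⟨u, hvu, hu⟩ := hvI
      exact ⟨u, hvu, Or.inl (Nat.pos_of_ne_zero hu)⟩
  · have hIP : #I ≤ #{v | 0 < f v} := card_le_card fun v hv => by
      simp only [I, mem_filter] at hv ⊢
      exact ⟨hv.1, hv.2.1⟩
    rw [sum_add_distrib, sum_boole, Nat.cast_id, filter_mem_eq_inter, univ_inter]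
    have := card_image_le (s := I) (f := b)
    omega

lemma IsSRDF.card_eq_zero_le_two (hf : IsSRDF G f) (hs : ∑ v, (f v - 1) ≤ 1) :
    #{v | f v = 0} ≤ 2 := by
  by_cases hZ : ∃ v, f v = 0
  · obtain ⟨v₀, hv₀⟩ := hZ
    obtain ⟨z, hv₀z, hz⟩ := hf.2 v₀ hv₀
    have hz2 : 2 ≤ f z := two_le_of_dominates hv₀z.symm hv₀ hz
    have hz_le : f z - 1 ≤ ∑ v, (f v - 1) :=
      single_le_sum (f := fun v => f v - 1) (fun _ _ => Nat.zero_le _) (mem_univ z)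
    -- every zero is dominated by a vertex of label at least `2`, and `z` is the only one
    have hsub : ((({v | f v = 0} : Finset V)) : Set V) ⊆ {w | G.Adj z w ∧ f w = 0} := by
      intro v hv
      replace hv : f v = 0 := (mem_filter.1 (mem_coe.1 hv)).2
      obtain ⟨u, hvu, hu⟩ := hf.2 v hv
      obtain rfl : u = z :=
        eq_of_two_le_of_sum_tsub_one_le_one hs (two_le_of_dominates hvu.symm hv hu) hz2
      exact ⟨hvu.symm, hv⟩
    have := Set.ncard_le_ncard hsub
    rw [Set.ncard_coe_finset] at this
    omega
  · simp only [not_exists] at hZ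
    simp [hZ]

lemma IsSRDF.one_le_sum_tsub_one (hf : IsSRDF G f) {v : V} (hv : f v = 0) :
    1 ≤ ∑ u, (f u - 1) := by
  obtain ⟨z, hvz, hz⟩ := hf.2 v hv
  have := two_le_of_dominates hvz.symm hv hz
  have := single_le_sum (f := fun u => f u - 1) (fun _ _ => Nat.zero_le _) (mem_univ z)
  omega

theorem stmt10 (G : SimpleGraph V) (hn : 4 ≤ Fintype.card V) (hni : NoIsolated G) :
    tsrd G ≤ 2 * (srd G - 1) := by
  obtain ⟨f, hf, hsrd⟩ := exists_isSRDF_sum_eq_srd G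
  suffices tsrd G + 2 ≤ 2 * ∑ v, f v by omega
  have hweight := sum_eq_card_pos_add_sum_tsub_one univ f
  have hcard : #{v | 0 < f v} + #{v | f v = 0} = Fintype.card V := by
    simpa using card_filter_add_card_filter_not (s := univ) (fun v => 0 < f v)
  have htsrd_le_card := tsrd_le_card hni
  by_cases hZ : ∃ v, f v = 0
  · obtain ⟨v₀, hv₀⟩ := hZ
    have := hf.one_le_sum_tsub_one hv₀
    rcases le_or_gt (∑ v, (f v - 1)) 1 with hs | hs
    · have := hf.card_eq_zero_le_two hs
      omega
    · obtain ⟨g, hg, hgw⟩ := hf.exists_isTSRDF_sum_le hni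
      have := tsrd_le_sum hg
      omega
  · simp only [not_exists] at hZ
    have : #{v | f v = 0} = 0 := by simp [hZ]
    omega
end
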